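/- arXiv:2005.02019 — 4 statements merged into one kernel-verified Lean document; each statement's English description precedes it below -/
import Mathlib

section
/- Let c > 1 be a real number and ε > 0. Then for all sufficiently large a₀ ∈ ℕ, the sequence defined by a_{k+1} = ⌊c · a_k⌋ satisfies c^{k-ε} · a₀ ≤ a_k ≤ c^k · a₀ for all k ∈ ℕ. -/
/-- Floor-sequence lemma: for `c > 1` and `ε > 0`, for all sufficiently large
starting values `a 0`, the sequence `a (k+1) = ⌊c * a k⌋` satisfies
`c^(k-ε) * a 0 ≤ a k ≤ c^k * a 0`. -/
theorem stmt_0 (c ε : ℝ) (hc : 1 < c) (hε : 0 < ε) :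
    ∃ N : ℕ, ∀ a : ℕ → ℕ, N ≤ a 0 →
      (∀ k : ℕ, a (k + 1) = ⌊c * (a k : ℝ)⌋₊) →
      ∀ k : ℕ, c ^ ((k : ℝ) - ε) * (a 0 : ℝ) ≤ (a k : ℝ) ∧
        (a k : ℝ) ≤ c ^ (k : ℕ) * (a 0 : ℝ) := by
  have hc0 : (0 : ℝ) < c := lt_trans one_pos hc
  have hc1 : (0 : ℝ) < c - 1 := by linarith
  set D : ℝ := 1 / (c - 1) with hD
  have hD0 : 0 < D := by positivity
  have hcε : c ^ (-ε) < 1 := by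
    rw [Real.rpow_neg hc0.le]
    rw [inv_lt_one_iff₀]
    right
    exact Real.one_lt_rpow_iff_of_pos hc0 |>.2 (Or.inl ⟨hc, hε⟩)
  have hcε0 : 0 < c ^ (-ε) := Real.rpow_pos_of_pos hc0 _
  set δ : ℝ := 1 - c ^ (-ε) with hδ
  have hδ0 : 0 < δ := by simp [hδ]; linarith
  refine ⟨⌈D / δ⌉₊ + 1, fun a ha0 hrec k => ?_⟩
  have ha0R : D / δ ≤ (a 0 : ℝ) := by
    calc D / δ ≤ (⌈D / δ⌉₊ : ℝ) := Nat.le_ceil _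
    _ ≤ (a 0 : ℝ) := by exact_mod_cast le_trans (Nat.le_succ _) ha0
  have haδ : D ≤ (a 0 : ℝ) * δ := by
    rw [div_le_iff₀ hδ0] at ha0R; linarith
  -- Main induction
  have key : ∀ k : ℕ, c ^ k * (a 0 : ℝ) - (c ^ k - 1) * D ≤ (a k : ℝ) ∧
      (a k : ℝ) ≤ c ^ k * (a 0 : ℝ) := by
    intro k
    induction k with
    | zero => simp
    | succ k ih =>
      obtain ⟨ihl, ihu⟩ := ih
      have hak0 : (0 : ℝ) ≤ c * (a k : ℝ) := by positivity
      constructor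
      · have h1 : c * (a k : ℝ) - 1 < (a (k + 1) : ℝ) := by
          rw [hrec k]
          exact_mod_cast Nat.sub_one_lt_floor _
        have h2 : c * (c ^ k * (a 0 : ℝ) - (c ^ k - 1) * D) ≤ c * (a k : ℝ) := by
          exact mul_le_mul_of_nonneg_left ihl hc0.le
        have hDc : (c - 1) * D = 1 := by rw [hD]; field_simp
        have hp : c ^ (k + 1) = c ^ k * c := pow_succ c k
        nlinarith [hp, hDc, h1, h2]
      · rw [hrec k]
        calc ((⌊c * (a k : ℝ)⌋₊ : ℝ)) ≤ c * (a k : ℝ) := Nat.floor_le hak0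
        _ ≤ c * (c ^ k * (a 0 : ℝ)) := mul_le_mul_of_nonneg_left ihu hc0.le
        _ = c ^ (k + 1) * (a 0 : ℝ) := by ring
  obtain ⟨hl, hu⟩ := key k
  refine ⟨?_, hu⟩
  have hck : (0 : ℝ) < c ^ k := by positivity
  have hrw : c ^ ((k : ℝ) - ε) = c ^ k * c ^ (-ε) := by
    rw [sub_eq_add_neg, Real.rpow_add hc0, Real.rpow_natCast]
  rw [hrw]
  have h1 : c ^ k * c ^ (-ε) * (a 0 : ℝ) = c ^ k * ((a 0 : ℝ) * (1 - δ)) := by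
    rw [hδ]; ring
  rw [h1]
  have h2 : (a 0 : ℝ) * (1 - δ) ≤ (a 0 : ℝ) - D := by nlinarith
  have h3 : c ^ k * ((a 0 : ℝ) - D) ≤ c ^ k * (a 0 : ℝ) - (c ^ k - 1) * D := by
    nlinarith [hck, hD0, one_le_pow₀ hc.le (n := k)]
  nlinarith [mul_le_mul_of_nonneg_left h2 hck.le]
end

section
/- For integers d₁ > 2 and all sufficiently large n₁ (and any n₂ > d₁n₁), the function f : [1, n₂] → ℕ defined by f(x) = 2^x for x ≤ n₁, f(x) = f(x−1) + x + 1 for n₁ < x ≤ d₁n₁, and f(x) = ⌊2^{1/(2d₁)}f(x−1)⌋ for d₁n₁ < x ≤ n₂, is submultiplicative: f(p+q) ≤ f(p)·f(q) whenever p, q ≥ 1 and p + q ≤ n₂. -/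
/-! Write `c = 2^(1/(2d))`, so that `c^(2d) = 2` and `1 + 1/(4d) ≤ c`. From `n₁` on, `f` grows by a
factor at most `c` per step: in the middle range because `f ≥ 2^n₁` swamps the increments `x + 1`,
and above `d n₁` by definition. Conversely `f p ≥ c^p` for every `p`: below `d n₁` because
`c^(2 d n₁) = 2^n₁`, and above it because the invariant `f x ≥ c^x + 4d` survives the rounding
down. Hence `f (p + q) ≤ c^p f q ≤ f p f q` once `q > n₁`, while for `p, q ≤ n₁` both sides are
powers of two. -/

theorem eight_mul_cube_le_two_pow {n : ℕ} (hn : 16 ≤ n) : 8 * n ^ 3 ≤ 2 ^ n := by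
  induction n, hn using Nat.le_induction with
  | base => norm_num
  | succ k hk ih =>
    have hcube : (k + 1) ^ 3 ≤ 2 * k ^ 3 := by nlinarith [sq_nonneg k]
    rw [pow_succ 2 k]
    linarith

theorem four_mul_le_two_pow {d n : ℕ} (hd : d ≤ n) (hn : 16 ≤ n) :
    4 * d * (d * n + 1) ≤ 2 ^ n :=
  calc 4 * d * (d * n + 1) ≤ 4 * n * (n * n + n * n) := by gcongr; nlinarith
    _ = 8 * n ^ 3 := by ring
    _ ≤ 2 ^ n := eight_mul_cube_le_two_pow hn

theorem le_pow_mul_of_le_mul_succ {g : ℕ → ℝ} {c : ℝ} (hc : 0 ≤ c) {m n : ℕ}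
    (h : ∀ x, m ≤ x → x < n → g (x + 1) ≤ c * g x) :
    ∀ i, m + i ≤ n → g (m + i) ≤ c ^ i * g m
  | 0, _ => by simp
  | i + 1, hi =>
    calc g (m + i + 1) ≤ c * g (m + i) := h _ (by omega) (by omega)
      _ ≤ c * (c ^ i * g m) := by gcongr; exact le_pow_mul_of_le_mul_succ hc h i (by omega)
      _ = c ^ (i + 1) * g m := by ring

theorem pow_add_le_of_mul_sub_one_le {g : ℕ → ℝ} {c K : ℝ} (hc : 0 ≤ c) (hK : 1 ≤ (c - 1) * K)
    {m n : ℕ} (h : ∀ x, m ≤ x → x < n → c * g x - 1 ≤ g (x + 1)) (hm : c ^ m + K ≤ g m) :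
    ∀ x, m ≤ x → x ≤ n → c ^ x + K ≤ g x := by
  intro x hx
  induction x, hx using Nat.le_induction with
  | base => exact fun _ => hm
  | succ x hx ih =>
    intro hxn
    calc c ^ (x + 1) + K ≤ c * (c ^ x + K) - 1 := by rw [pow_succ]; linarith
      _ ≤ c * g x - 1 := by gcongr; exact ih (by omega)
      _ ≤ g (x + 1) := h x hx (by omega)

noncomputable def growthFactor (d : ℕ) : ℝ := (2 : ℝ) ^ ((1 : ℝ) / (2 * (d : ℝ)))

theorem growthFactor_pow {d : ℕ} (hd : d ≠ 0) : growthFactor d ^ (2 * d) = 2 := by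
  rw [growthFactor, ← Real.rpow_natCast, ← Real.rpow_mul zero_le_two]
  have : (1 : ℝ) / (2 * (d : ℝ)) * ((2 * d : ℕ) : ℝ) = 1 := by push_cast; field_simp
  rw [this, Real.rpow_one]

theorem one_le_growthFactor (d : ℕ) : 1 ≤ growthFactor d :=
  Real.one_le_rpow one_le_two (by positivity)

theorem growthFactor_le_two {d : ℕ} (hd : d ≠ 0) : growthFactor d ≤ 2 :=
  calc growthFactor d ≤ growthFactor d ^ (2 * d) :=
        le_self_pow₀ (one_le_growthFactor d) (by omega)
    _ = 2 := growthFactor_pow hd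

/-- `c = exp (log 2 / (2d)) ≥ 1 + log 2 / (2d)` and `log 2 > 1/2`. -/
theorem one_le_four_mul_growthFactor_sub_one {d : ℕ} (hd : 0 < d) :
    1 ≤ 4 * d * (growthFactor d - 1) := by
  have hd' : (0 : ℝ) < d := by exact_mod_cast hd
  have hexp : 1 + Real.log 2 / (2 * d) ≤ growthFactor d := by
    rw [growthFactor, Real.rpow_def_of_pos two_pos]
    convert Real.add_one_le_exp _ using 1
    ring
  have hlog := Real.log_two_gt_d9
  calc (1 : ℝ) ≤ 4 * d * (Real.log 2 / (2 * d)) := by field_simp; linarith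
    _ ≤ 4 * d * (growthFactor d - 1) := by gcongr; linarith

structure IsBasicConstruction (d n₁ n₂ : ℕ) (f : ℕ → ℕ) : Prop where
  eq_two_pow : ∀ x, 1 ≤ x → x ≤ n₁ → f x = 2 ^ x
  eq_add : ∀ x, n₁ < x → x ≤ d * n₁ → f x = f (x - 1) + x + 1
  eq_floor : ∀ x, d * n₁ < x → x ≤ n₂ → f x = ⌊growthFactor d * (f (x - 1) : ℝ)⌋₊

namespace IsBasicConstruction

variable {d n₁ n₂ : ℕ} {f : ℕ → ℕ} {x : ℕ}

theorem eq_add_succ (hf : IsBasicConstruction d n₁ n₂ f) (h₁ : n₁ ≤ x) (h₂ : x < d * n₁) :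
    f (x + 1) = f x + x + 2 := by
  rw [hf.eq_add (x + 1) (by omega) (by omega), Nat.add_sub_cancel]
  ring

theorem eq_floor_succ (hf : IsBasicConstruction d n₁ n₂ f) (h₁ : d * n₁ ≤ x) (h₂ : x < n₂) :
    f (x + 1) = ⌊growthFactor d * (f x : ℝ)⌋₊ := by
  rw [hf.eq_floor (x + 1) (by omega) (by omega)]
  simp only [Nat.add_sub_cancel]

theorem le_succ (hf : IsBasicConstruction d n₁ n₂ f) (h₁ : n₁ ≤ x) (h₂ : x < n₂) :
    f x ≤ f (x + 1) := by
  rcases lt_or_ge x (d * n₁) with h | h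
  · rw [hf.eq_add_succ h₁ h]
    omega
  · rw [hf.eq_floor_succ h h₂]
    exact Nat.le_floor (le_mul_of_one_le_left (Nat.cast_nonneg _) (one_le_growthFactor d))

theorem two_pow_le (hf : IsBasicConstruction d n₁ n₂ f) (hn₁ : 1 ≤ n₁) (h₁ : n₁ ≤ x)
    (h₂ : x ≤ n₂) : 2 ^ n₁ ≤ f x := by
  induction x, h₁ using Nat.le_induction with
  | base => rw [hf.eq_two_pow n₁ hn₁ le_rfl]
  | succ x hx ih => exact (ih (by omega)).trans (hf.le_succ hx (by omega))

theorem le_growthFactor_mul (hf : IsBasicConstruction d n₁ n₂ f) (hd : 0 < d) (hn₁ : 1 ≤ n₁)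
    (hn : 4 * d * (d * n₁ + 1) ≤ 2 ^ n₁) (h₁ : n₁ ≤ x) (h₂ : x < n₂) :
    (f (x + 1) : ℝ) ≤ growthFactor d * f x := by
  rcases lt_or_ge x (d * n₁) with h | h
  · have hx : (x : ℝ) + 2 ≤ d * n₁ + 1 := by exact_mod_cast (by omega : x + 2 ≤ d * n₁ + 1)
    have hn' : 4 * (d : ℝ) * (d * n₁ + 1) ≤ f x := by
      exact_mod_cast hn.trans (hf.two_pow_le hn₁ h₁ h₂.le)
    have hc := one_le_four_mul_growthFactor_sub_one hd
    have hc₀ : 0 ≤ growthFactor d - 1 := by linarith [one_le_growthFactor d]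
    have hincr : (x : ℝ) + 2 ≤ (growthFactor d - 1) * f x :=
      calc (x : ℝ) + 2 ≤ (x + 2) * (4 * d * (growthFactor d - 1)) :=
            le_mul_of_one_le_right (by positivity) hc
        _ ≤ (d * n₁ + 1) * (4 * d * (growthFactor d - 1)) := by gcongr
        _ = (growthFactor d - 1) * (4 * d * (d * n₁ + 1)) := by ring
        _ ≤ (growthFactor d - 1) * f x := by gcongr
    rw [hf.eq_add_succ h₁ h]
    push_cast
    linarith
  · rw [hf.eq_floor_succ h h₂]
    exact Nat.floor_le (by have := one_le_growthFactor d; positivity)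

theorem le_growthFactor_pow_mul (hf : IsBasicConstruction d n₁ n₂ f) (hd : 0 < d)
    (hn₁ : 1 ≤ n₁) (hn : 4 * d * (d * n₁ + 1) ≤ 2 ^ n₁) {m i : ℕ} (hm : n₁ ≤ m)
    (hmi : m + i ≤ n₂) : (f (m + i) : ℝ) ≤ growthFactor d ^ i * f m :=
  le_pow_mul_of_le_mul_succ (g := fun x => (f x : ℝ)) (by linarith [one_le_growthFactor d])
    (fun _ hx hxn => hf.le_growthFactor_mul hd hn₁ hn (hm.trans hx) hxn) i hmi

theorem le_two_pow (hf : IsBasicConstruction d n₁ n₂ f) (hd : 0 < d) (hn₁ : 1 ≤ n₁)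
    (hn : 4 * d * (d * n₁ + 1) ≤ 2 ^ n₁) (h₁ : 1 ≤ x) (h₂ : x ≤ n₂) : f x ≤ 2 ^ x := by
  rcases le_or_gt x n₁ with h | h
  · exact (hf.eq_two_pow x h₁ h).le
  obtain ⟨i, rfl⟩ := Nat.exists_eq_add_of_le h.le
  have hstep := hf.le_growthFactor_pow_mul hd hn₁ hn le_rfl h₂
  rw [hf.eq_two_pow n₁ hn₁ le_rfl] at hstep
  have hc := growthFactor_le_two hd.ne'
  have : (f (n₁ + i) : ℝ) ≤ 2 ^ (n₁ + i) :=
    calc (f (n₁ + i) : ℝ) ≤ growthFactor d ^ i * 2 ^ n₁ := by exact_mod_cast hstep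
      _ ≤ 2 ^ i * 2 ^ n₁ := by gcongr; linarith [one_le_growthFactor d]
      _ = 2 ^ (n₁ + i) := by ring
  exact_mod_cast this

/-- At `x = d n₁` the bound holds because `c^(d n₁) = √(2^n₁)` while `f (d n₁) ≥ 2^n₁`. -/
theorem growthFactor_pow_add_le (hf : IsBasicConstruction d n₁ n₂ f) (hd : 0 < d)
    (hn₁ : 1 ≤ n₁) (hn : 4 * d * (d * n₁ + 1) ≤ 2 ^ n₁) (h₁ : d * n₁ ≤ x) (h₂ : x ≤ n₂) :
    growthFactor d ^ x + 4 * d ≤ f x := by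
  set c := growthFactor d
  have hbase : c ^ (d * n₁) + 4 * d ≤ f (d * n₁) := by
    have hsq : (c ^ (d * n₁)) ^ 2 = 2 ^ n₁ := by
      rw [← pow_mul, show d * n₁ * 2 = 2 * d * n₁ by ring, pow_mul, growthFactor_pow hd.ne']
    have hdn : (1 : ℝ) ≤ d * n₁ := by exact_mod_cast Nat.mul_pos hd hn₁
    have hn' : 4 * (d : ℝ) * (d * n₁ + 1) ≤ f (d * n₁) := by
      exact_mod_cast hn.trans (hf.two_pow_le hn₁ (Nat.le_mul_of_pos_left n₁ hd) (h₁.trans h₂))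
    have hn' : 4 * (d : ℝ) * (d * n₁ + 1) ≤ 2 ^ n₁ := by exact_mod_cast hn
    have hf' : (2 : ℝ) ^ n₁ ≤ f (d * n₁) := by
      exact_mod_cast hf.two_pow_le hn₁ (Nat.le_mul_of_pos_left n₁ hd) (h₁.trans h₂)
    have hd' : (1 : ℝ) ≤ d := by exact_mod_cast hd
    have hy₀ : 0 ≤ c ^ (d * n₁) := pow_nonneg (by linarith [one_le_growthFactor d]) _
    have hy₂ : 2 ≤ c ^ (d * n₁) := by nlinarith
    nlinarith
  refine pow_add_le_of_mul_sub_one_le (g := fun x => (f x : ℝ))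
    (by linarith [one_le_growthFactor d])
    (by linarith [one_le_four_mul_growthFactor_sub_one hd]) (fun y hy hyn => ?_) hbase x h₁ h₂
  rw [hf.eq_floor_succ hy hyn]
  linarith [Nat.lt_floor_add_one (c * f y)]

theorem growthFactor_pow_le (hf : IsBasicConstruction d n₁ n₂ f) (hd : 0 < d) (hn₁ : 1 ≤ n₁)
    (hn : 4 * d * (d * n₁ + 1) ≤ 2 ^ n₁) (h₁ : 1 ≤ x) (h₂ : x ≤ n₂) :
    growthFactor d ^ x ≤ f x := by
  have hc := one_le_growthFactor d
  rcases le_or_gt x n₁ with hx | hx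
  · rw [hf.eq_two_pow x h₁ hx]
    push_cast
    gcongr
    exact growthFactor_le_two hd.ne'
  rcases le_or_gt x (d * n₁) with hx' | hx'
  · calc growthFactor d ^ x ≤ growthFactor d ^ (2 * d * n₁) := pow_le_pow_right₀ hc (by nlinarith)
      _ = 2 ^ n₁ := by rw [pow_mul, growthFactor_pow hd.ne']
      _ ≤ f x := by exact_mod_cast hf.two_pow_le hn₁ hx.le h₂
  · linarith [hf.growthFactor_pow_add_le hd hn₁ hn hx'.le h₂]

theorem le_mul_of_lt (hf : IsBasicConstruction d n₁ n₂ f) (hd : 0 < d) (hn₁ : 1 ≤ n₁)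
    (hn : 4 * d * (d * n₁ + 1) ≤ 2 ^ n₁) {p q : ℕ} (hp : 1 ≤ p) (hq : n₁ < q)
    (hpq : p + q ≤ n₂) : f (p + q) ≤ f p * f q := by
  have : (f (q + p) : ℝ) ≤ f p * f q :=
    calc (f (q + p) : ℝ) ≤ growthFactor d ^ p * f q :=
          hf.le_growthFactor_pow_mul hd hn₁ hn hq.le (by omega)
      _ ≤ f p * f q := by gcongr; exact hf.growthFactor_pow_le hd hn₁ hn hp (by omega)
  rw [add_comm]
  exact_mod_cast this

theorem submultiplicative (hf : IsBasicConstruction d n₁ n₂ f) (hd : 0 < d) (hn₁ : 1 ≤ n₁)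
    (hn : 4 * d * (d * n₁ + 1) ≤ 2 ^ n₁) {p q : ℕ} (hp : 1 ≤ p) (hq : 1 ≤ q)
    (hpq : p + q ≤ n₂) : f (p + q) ≤ f p * f q := by
  rcases lt_or_ge n₁ q with hq₁ | hq₁
  · exact hf.le_mul_of_lt hd hn₁ hn hp hq₁ hpq
  rcases lt_or_ge n₁ p with hp₁ | hp₁
  · rw [add_comm, mul_comm]
    exact hf.le_mul_of_lt hd hn₁ hn hq hp₁ (by omega)
  rw [hf.eq_two_pow p hp hp₁, hf.eq_two_pow q hq hq₁, ← pow_add]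
  exact hf.le_two_pow hd hn₁ hn (by omega) hpq

end IsBasicConstruction

/-- Proposition 3.3: the function of the basic construction on `[1, n₂]` is
submultiplicative, for `d₁ > 2` and `n₁` sufficiently large. -/
theorem stmt_9 (d₁ : ℕ) (hd₁ : 2 < d₁) :
    ∃ N : ℕ, ∀ n₁ : ℕ, N ≤ n₁ → ∀ n₂ : ℕ, d₁ * n₁ < n₂ →
      ∀ f : ℕ → ℕ,
        (∀ x : ℕ, 1 ≤ x → x ≤ n₁ → f x = 2 ^ x) →
        (∀ x : ℕ, n₁ < x → x ≤ d₁ * n₁ → f x = f (x - 1) + x + 1) →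
        (∀ x : ℕ, d₁ * n₁ < x → x ≤ n₂ →
          f x = ⌊(2 : ℝ) ^ ((1 : ℝ) / (2 * (d₁ : ℝ))) * (f (x - 1) : ℝ)⌋₊) →
        ∀ p q : ℕ, 1 ≤ p → 1 ≤ q → p + q ≤ n₂ → f (p + q) ≤ f p * f q := by
  refine ⟨d₁ + 16, fun n₁ hN n₂ _ f h_low h_mid h_high p q hp hq hpq => ?_⟩
  have hf : IsBasicConstruction d₁ n₁ n₂ f := ⟨h_low, h_mid, h_high⟩
  exact hf.submultiplicative (by omega) (by omega) (four_mul_le_two_pow (by omega) (by omega))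
    hp hq hpq
end

section
/- There exist increasing submultiplicative functions f : ℕ → ℕ. In particular, the function f constructed piecewise from arbitrary valid parameter sequences (d_k, n_k) — exponential on [1, n₁], arithmetic on (n_k, d_k n_k], and geometric with ratio 2^{1/(2d₁⋯d_k)} (with floors) on (d_k n_k, n_{k+1}] — is increasing and satisfies f(p+q) ≤ f(p)f(q) for all p, q ≥ 1. -/
set_option maxHeartbeats 1000000


/-- There exist increasing submultiplicative functions: the full piecewise
construction with valid parameters `(d_k, n_k)` is strictly increasing on
`[1, ∞)` and submultiplicative. -/
theorem stmt_12 (f d n : ℕ → ℕ)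
    (P : ℕ → ℕ) (hP : ∀ k, P k = ∏ i ∈ Finset.Icc 1 k, d i)
    (hd : ∀ k, 1 ≤ k → 2 < d k)
    (hord : ∀ k, 1 ≤ k → d k * n k < n (k + 1))
    (hn1 : 3 ≤ n 1)
    (hbase : ∀ x, 1 ≤ x → x ≤ n 1 → f x = 2 ^ x)
    (harith : ∀ k, 1 ≤ k → ∀ x, n k < x → x ≤ d k * n k →
      f x = f (x - 1) + x + 1)
    (hgeom : ∀ k, 1 ≤ k → ∀ x, d k * n k < x → x ≤ n (k + 1) →
      f x = ⌊(2 : ℝ) ^ ((1 : ℝ) / (2 * (P k : ℝ))) * (f (x - 1) : ℝ)⌋₊)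
    (hcondI : ∀ k, 1 ≤ k → ∀ x, d k * n k ≤ x → x ≤ n (k + 1) →
      (f (d k * n k) : ℝ) *
        2 ^ (((x : ℝ) - (d k * n k : ℝ)) / (2 * (P k : ℝ)) - 2 ^ (-(k : ℝ) - 2))
        ≤ (f x : ℝ))
    (hdlow : ∀ k, 2 ≤ k → (n (k - 1) : ℝ) ≤ 2 * (P (k - 2) : ℝ) * (d k : ℝ))
    (hdbig : ∀ k, 2 ≤ k → d (k - 1) * n (k - 1) + 1 < d k)
    (h13 : ∀ k, 1 ≤ k →
      (f (d k * n k) : ℝ) ≤ 2 ^ ((1 : ℝ) / 3) * (f (n k) : ℝ))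
    (hn2 : ∀ k, 2 ≤ k → 2 * (d (k - 1) * n (k - 1)) < n k)
    (hratio : ∀ k, 1 ≤ k → ∀ x, n k < x → x ≤ d k * n k →
      (f x : ℝ) ≤ 2 ^ ((1 : ℝ) / (2 * (P k : ℝ))) * (f (x - 1) : ℝ))
    (hbig : ∀ k, 1 ≤ k → 2 * (d k ^ 2 * n k ^ 2) ≤ f (n k)) :
    StrictMonoOn f (Set.Ici 1) ∧
      ∀ p q : ℕ, 1 ≤ p → 1 ≤ q → f (p + q) ≤ f p * f q := by
  -- basic facts about d, n, P
  have hd3 : ∀ k, 1 ≤ k → 3 ≤ d k := fun k hk => hd k hk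
  have hn3 : ∀ k, 1 ≤ k → 3 ≤ n k := by
    intro k hk
    induction k with
    | zero => omega
    | succ k ih =>
      rcases Nat.eq_zero_or_pos k with h0 | h1
      · subst h0; exact hn1
      · have h := hord k h1
        have := hd3 k h1
        have := ih h1
        nlinarith
  have hnd : ∀ k, 1 ≤ k → n k ≤ d k * n k := by
    intro k hk
    have := hd3 k hk
    nlinarith [hn3 k hk]
  have hnlt : ∀ k, 1 ≤ k → n k < n (k + 1) :=
    fun k hk => lt_of_le_of_lt (hnd k hk) (hord k hk)
  have hnmono : ∀ a b, 1 ≤ a → a ≤ b → n a ≤ n b := by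
    intro a b ha hab
    induction b with
    | zero => omega
    | succ b ih =>
      rcases Nat.lt_or_ge a (b+1) with h | h
      · have hb1 : 1 ≤ b := by omega
        exact le_trans (ih (by omega)) (le_of_lt (hnlt b hb1))
      · have : a = b + 1 := by omega
        subst this; rfl
  have hP0 : P 0 = 1 := by rw [hP 0]; simp
  have hPrec : ∀ k, 1 ≤ k → P k = P (k - 1) * d k := by
    intro k hk
    obtain ⟨m, rfl⟩ : ∃ m, k = m + 1 := ⟨k - 1, by omega⟩
    rw [hP (m+1), hP (m+1-1)]
    simp only [Nat.add_sub_cancel]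
    exact Finset.prod_Icc_succ_top (by omega) d
  have hPpos : ∀ k, 1 ≤ P k := by
    intro k
    rw [hP k]
    apply Finset.one_le_prod'
    intro i hi
    have : 1 ≤ i := (Finset.mem_Icc.mp hi).1
    have := hd3 i this
    omega
  have hPmono : ∀ a b, a ≤ b → P a ≤ P b := by
    intro a b hab
    induction b with
    | zero =>
      have : a = 0 := by omega
      subst this; exact le_rfl
    | succ b ih =>
      rcases Nat.lt_or_ge a (b+1) with h | h
      · have h1 : P (b+1) = P b * d (b+1) := by
          have := hPrec (b+1) (by omega); simpa using this
        have := hd3 (b+1) (by omega)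
        have := ih (by omega)
        nlinarith [hPpos b]
      · have : a = b + 1 := by omega
        subst this; rfl
  have hPn : ∀ k, 1 ≤ k → P (k - 1) ≤ n k := by
    intro k hk
    induction k with
    | zero => omega
    | succ k ih =>
      rcases Nat.eq_zero_or_pos k with h0 | h1
      · subst h0; simp only [Nat.zero_add, Nat.add_sub_cancel, hP0]; omega
      · have h1' : P ((k+1) - 1) = P (k - 1) * d k := by
          simpa using hPrec k h1
        have h2 := ih h1
        have h3 := hord k h1
        simp only [Nat.add_sub_cancel] at h1' ⊢
        calc P k = P (k-1) * d k := h1'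
          _ ≤ n k * d k := Nat.mul_le_mul_right _ h2
          _ = d k * n k := Nat.mul_comm _ _
          _ ≤ n (k+1) := le_of_lt h3
  -- coverage
  have hgrow : ∀ j, n 1 + j ≤ n (j + 1) := by
    intro j
    induction j with
    | zero => simp
    | succ j ih =>
      have := hnlt (j+1) (by omega)
      omega
  have hcover : ∀ x, n 1 ≤ x → ∃ k, 1 ≤ k ∧ n k ≤ x ∧ x < n (k + 1) := by
    intro x hx
    have hex : ∃ j, x < n (j + 1) := ⟨x + 1, by have := hgrow (x+1); omega⟩
    classical
    have hk0 := Nat.find_spec hex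
    set k0 := Nat.find hex with hk0def
    rcases Nat.eq_zero_or_pos k0 with h0 | hpos
    · exfalso; rw [h0] at hk0
      simp only [Nat.zero_add] at hk0
      omega
    · have hmin : ¬ x < n ((k0 - 1) + 1) := Nat.find_min hex (by omega)
      have : (k0 - 1) + 1 = k0 := by omega
      rw [this] at hmin
      exact ⟨k0, hpos, by omega, hk0⟩
  -- strict increase step
  have hstep : ∀ x, 1 ≤ x → f x < f (x + 1) := by
    intro x
    induction x using Nat.strong_induction_on with
    | _ x IH =>
      intro hx1
      by_cases hb : x + 1 ≤ n 1
      · rw [hbase x hx1 (by omega), hbase (x+1) (by omega) hb]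
        exact Nat.pow_lt_pow_right one_lt_two (Nat.lt_succ_self x)
      · push_neg at hb
        obtain ⟨k, hk1, hkx, hkx'⟩ := hcover x (by omega)
        by_cases ha : x + 1 ≤ d k * n k
        · rw [harith k hk1 (x+1) (by omega) ha]
          simp only [Nat.add_sub_cancel]
          omega
        · push_neg at ha
          have hdn : d k * n k ≤ x := by omega
          -- f (n k) ≤ f x by the induction hypothesis chain
          have climb : ∀ m, n k ≤ m → m ≤ x → f (n k) ≤ f m := by
            intro m
            induction m with
            | zero => intro h1 _; have := hn3 k hk1; omega
            | succ m ihm =>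
              intro h1 h2
              rcases Nat.lt_or_ge (n k) (m+1) with h | h
              · have hm1 : 1 ≤ m := by have := hn3 k hk1; omega
                have : f (n k) ≤ f m := ihm (by omega) (by omega)
                exact le_trans this (le_of_lt (IH m (by omega) hm1))
              · have : n k = m + 1 := by omega
                rw [this]
          have hfnk : f (n k) ≤ f x := climb x hkx le_rfl
          have hfx : 2 * (d k ^ 2 * n k ^ 2) ≤ f x := le_trans (hbig k hk1) hfnk
          have h4P : 4 * P k ≤ f x := by
            have h1 : P k ≤ n k * d k := by
              calc P k = P (k-1) * d k := hPrec k hk1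
                _ ≤ n k * d k := Nat.mul_le_mul_right _ (hPn k hk1)
            have hdk := hd3 k hk1
            have hnk := hn3 k hk1
            have h2 : 2 ≤ n k * d k := by nlinarith
            calc 4 * P k ≤ 4 * (n k * d k) := by omega
              _ ≤ 2 * ((n k * d k) * (n k * d k)) := by nlinarith
              _ = 2 * (d k ^ 2 * n k ^ 2) := by ring
              _ ≤ f x := hfx
          -- geometric step
          rw [hgeom k hk1 (x+1) ha (by omega)]
          simp only [Nat.add_sub_cancel]
          have hPposR : (1:ℝ) ≤ (P k : ℝ) := by exact_mod_cast hPpos k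
          set t : ℝ := (1:ℝ) / (2 * (P k : ℝ)) with ht
          have ht0 : 0 < t := by positivity
          have hc : 1 + t / 2 ≤ (2:ℝ) ^ t := by
            rw [Real.rpow_def_of_pos (by norm_num : (0:ℝ) < 2)]
            have h1 : Real.log 2 * t + 1 ≤ Real.exp (Real.log 2 * t) :=
              Real.add_one_le_exp _
            have h2 : t / 2 ≤ Real.log 2 * t := by
              nlinarith [Real.log_two_gt_d9, ht0.le]
            linarith
          have hmt : (4:ℝ) * P k ≤ (f x : ℝ) := by exact_mod_cast h4P
          have ht2 : 1 ≤ t / 2 * (f x : ℝ) := by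
            rw [ht]
            rw [div_div, div_mul_eq_mul_div, le_div_iff₀ (by positivity)]
            calc (1:ℝ) * (2 * (P k:ℝ) * 2) = 4 * (P k:ℝ) := by ring
              _ ≤ (f x : ℝ) := hmt
              _ = 1 * (f x : ℝ) := (one_mul _).symm
          have hfx0 : (0:ℝ) ≤ (f x : ℝ) := Nat.cast_nonneg _
          have key : ((f x + 1 : ℕ) : ℝ) ≤ (2:ℝ) ^ t * (f x : ℝ) := by
            push_cast
            calc (f x : ℝ) + 1 ≤ (f x : ℝ) + t / 2 * (f x : ℝ) := by linarith
              _ = (1 + t / 2) * (f x : ℝ) := by ring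
              _ ≤ (2:ℝ) ^ t * (f x : ℝ) := mul_le_mul_of_nonneg_right hc hfx0
          have := Nat.le_floor key
          omega
  have hmono : ∀ a b, 1 ≤ a → a ≤ b → f a ≤ f b := by
    intro a b ha hab
    induction b with
    | zero => omega
    | succ b ih =>
      rcases Nat.lt_or_ge a (b+1) with h | h
      · exact le_trans (ih (by omega)) (le_of_lt (hstep b (by omega)))
      · have : a = b + 1 := by omega
        subst this; rfl
  -- real-valued single-step upper bound within block k
  have hUBstep : ∀ k, 1 ≤ k → ∀ z, n k < z → z ≤ n (k+1) →
      (f z : ℝ) ≤ (2:ℝ) ^ ((1:ℝ) / (2 * (P k : ℝ))) * (f (z-1) : ℝ) := by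
    intro k hk z hz1 hz2
    by_cases hz3 : z ≤ d k * n k
    · exact hratio k hk z hz1 hz3
    · push_neg at hz3
      rw [hgeom k hk z hz3 hz2]
      exact Nat.floor_le (by positivity)
  -- the lower-bound invariant at block boundaries
  have hInv : ∀ k, 1 ≤ k →
      (2:ℝ) ^ ((n k : ℝ) / (2 * (P (k-1) : ℝ)) + 1 + 2 ^ (-(k:ℝ))) ≤ (f (n k) : ℝ) := by
    intro k hk
    induction k, hk using Nat.le_induction with
    | base =>
      have hf : f (n 1) = 2 ^ (n 1) := hbase (n 1) (by omega) le_rfl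
      have hcast : (f (n 1) : ℝ) = (2:ℝ) ^ ((n 1 : ℕ) : ℝ) := by
        rw [hf, Real.rpow_natCast]; push_cast; ring
      rw [hcast]
      apply Real.rpow_le_rpow_of_exponent_le (by norm_num)
      have h3 : (3:ℝ) ≤ (n 1 : ℝ) := by exact_mod_cast hn1
      have hP00 : ((P (1-1) : ℕ) : ℝ) = 1 := by norm_num [hP0]
      rw [hP00]
      push_cast
      have h2 : (2:ℝ) ^ (-(1:ℝ)) = 1/2 := by norm_num
      rw [h2]
      linarith
    | succ k hk ih =>
      have hdn := hord k hk
      have h1 := hcondI k hk (n (k+1)) (le_of_lt hdn) le_rfl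
      have h2 : (f (n k) : ℝ) ≤ (f (d k * n k) : ℝ) := by
        exact_mod_cast hmono (n k) (d k * n k) (by have := hn3 k hk; omega) (hnd k hk)
      have hrp : ∀ y : ℝ, (0:ℝ) ≤ (2:ℝ) ^ y := fun y => Real.rpow_nonneg (by norm_num) y
      have h3 : (2:ℝ) ^ (((n k : ℝ) / (2 * (P (k-1) : ℝ)) + 1 + 2 ^ (-(k:ℝ)))
            + (((n (k+1) : ℝ) - (d k : ℝ) * (n k : ℝ)) / (2 * (P k : ℝ)) - 2 ^ (-(k:ℝ) - 2)))
          ≤ (f (n (k+1)) : ℝ) := by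
        rw [Real.rpow_add (by norm_num : (0:ℝ) < 2)]
        calc _ ≤ (f (n k) : ℝ) * (2:ℝ) ^ (((n (k+1) : ℝ) - (d k : ℝ) * (n k : ℝ)) / (2 * (P k : ℝ)) - 2 ^ (-(k:ℝ) - 2)) :=
              mul_le_mul_of_nonneg_right ih (hrp _)
          _ ≤ (f (d k * n k) : ℝ) * (2:ℝ) ^ (((n (k+1) : ℝ) - (d k : ℝ) * (n k : ℝ)) / (2 * (P k : ℝ)) - 2 ^ (-(k:ℝ) - 2)) :=
              mul_le_mul_of_nonneg_right h2 (hrp _)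
          _ ≤ (f (n (k+1)) : ℝ) := h1
      refine le_trans (Real.rpow_le_rpow_of_exponent_le (by norm_num)
        (?_ : (n (k+1) : ℝ) / (2 * (P ((k+1)-1) : ℝ)) + 1 + 2 ^ (-((k+1:ℕ)):ℝ) ≤ _)) h3
      -- exponent inequality
      have hPrecR : (P k : ℝ) = (P (k-1) : ℝ) * (d k : ℝ) := by
        exact_mod_cast hPrec k hk
      have hPk1 : (1:ℝ) ≤ (P (k-1) : ℝ) := by exact_mod_cast hPpos (k-1)
      have hdk : (3:ℝ) ≤ (d k : ℝ) := by exact_mod_cast hd3 k hk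
      have hfrac : ((d k : ℝ) * (n k : ℝ)) / (2 * (P k : ℝ)) = (n k : ℝ) / (2 * (P (k-1) : ℝ)) := by
        have e1 : (P (k-1) : ℝ) ≠ 0 := ne_of_gt (by linarith)
        have e2 : (d k : ℝ) ≠ 0 := ne_of_gt (by linarith)
        rw [hPrecR]
        field_simp
      have hpow1 : (2:ℝ) ^ (-(k:ℝ) - 2) = (2:ℝ) ^ (-(k:ℝ)) / 4 := by
        rw [Real.rpow_sub (by norm_num : (0:ℝ) < 2)]; norm_num
      have hposk : (0:ℝ) < (2:ℝ) ^ (-(k:ℝ)) := Real.rpow_pos_of_pos (by norm_num) _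
      simp only [Nat.add_sub_cancel]
      push_cast
      have hpow2 : (2:ℝ) ^ (-((k:ℝ) + 1)) = (2:ℝ) ^ (-(k:ℝ)) / 2 := by
        rw [show -((k:ℝ)+1) = -(k:ℝ) - 1 by ring,
          Real.rpow_sub (by norm_num : (0:ℝ) < 2), Real.rpow_one]
      rw [hpow2, hpow1, sub_div, hfrac]
      linarith
  -- lower bound throughout block k
  have hLow : ∀ k, 1 ≤ k → ∀ p, n k ≤ p → p ≤ n (k+1) →
      (2:ℝ) ^ ((p:ℝ) / (2 * (P k : ℝ))) ≤ (f p : ℝ) := by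
    intro k hk p hp1 hp2
    have hPrecR : (P k : ℝ) = (P (k-1) : ℝ) * (d k : ℝ) := by
      exact_mod_cast hPrec k hk
    have hPk1 : (1:ℝ) ≤ (P (k-1) : ℝ) := by exact_mod_cast hPpos (k-1)
    have hPk1' : (1:ℝ) ≤ (P k : ℝ) := by exact_mod_cast hPpos k
    have hdk : (3:ℝ) ≤ (d k : ℝ) := by exact_mod_cast hd3 k hk
    have hfrac : ((d k : ℝ) * (n k : ℝ)) / (2 * (P k : ℝ)) = (n k : ℝ) / (2 * (P (k-1) : ℝ)) := by
      have e1 : (P (k-1) : ℝ) ≠ 0 := ne_of_gt (by linarith)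
      have e2 : (d k : ℝ) ≠ 0 := ne_of_gt (by linarith)
      rw [hPrecR]
      field_simp
    have hposk : (0:ℝ) < (2:ℝ) ^ (-(k:ℝ)) := Real.rpow_pos_of_pos (by norm_num) _
    have hinv := hInv k hk
    by_cases hc : p ≤ d k * n k
    · -- arithmetic (or boundary) part
      have h1 : (p:ℝ) / (2 * (P k : ℝ)) ≤ (n k : ℝ) / (2 * (P (k-1) : ℝ)) + 1 + 2 ^ (-(k:ℝ)) := by
        have hpc : (p:ℝ) ≤ (d k : ℝ) * (n k : ℝ) := by exact_mod_cast hc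
        have : (p:ℝ) / (2 * (P k : ℝ)) ≤ ((d k : ℝ) * (n k : ℝ)) / (2 * (P k : ℝ)) := by
          gcongr
        rw [hfrac] at this
        linarith
      calc (2:ℝ) ^ ((p:ℝ) / (2 * (P k : ℝ)))
          ≤ (2:ℝ) ^ ((n k : ℝ) / (2 * (P (k-1) : ℝ)) + 1 + 2 ^ (-(k:ℝ))) :=
            Real.rpow_le_rpow_of_exponent_le (by norm_num) h1
        _ ≤ (f (n k) : ℝ) := hinv
        _ ≤ (f p : ℝ) := by
            exact_mod_cast hmono (n k) p (by have := hn3 k hk; omega) hp1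
    · push_neg at hc
      have h1 := hcondI k hk p (le_of_lt hc) hp2
      have h2 : (f (n k) : ℝ) ≤ (f (d k * n k) : ℝ) := by
        exact_mod_cast hmono (n k) (d k * n k) (by have := hn3 k hk; omega) (hnd k hk)
      have hrp : ∀ y : ℝ, (0:ℝ) ≤ (2:ℝ) ^ y := fun y => Real.rpow_nonneg (by norm_num) y
      have h3 : (2:ℝ) ^ (((n k : ℝ) / (2 * (P (k-1) : ℝ)) + 1 + 2 ^ (-(k:ℝ)))
            + (((p : ℝ) - (d k : ℝ) * (n k : ℝ)) / (2 * (P k : ℝ)) - 2 ^ (-(k:ℝ) - 2)))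
          ≤ (f p : ℝ) := by
        rw [Real.rpow_add (by norm_num : (0:ℝ) < 2)]
        calc _ ≤ (f (n k) : ℝ) * (2:ℝ) ^ (((p : ℝ) - (d k : ℝ) * (n k : ℝ)) / (2 * (P k : ℝ)) - 2 ^ (-(k:ℝ) - 2)) :=
              mul_le_mul_of_nonneg_right hinv (hrp _)
          _ ≤ (f (d k * n k) : ℝ) * (2:ℝ) ^ (((p : ℝ) - (d k : ℝ) * (n k : ℝ)) / (2 * (P k : ℝ)) - 2 ^ (-(k:ℝ) - 2)) :=
              mul_le_mul_of_nonneg_right h2 (hrp _)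
          _ ≤ (f p : ℝ) := h1
      have hpow1 : (2:ℝ) ^ (-(k:ℝ) - 2) = (2:ℝ) ^ (-(k:ℝ)) / 4 := by
        rw [Real.rpow_sub (by norm_num : (0:ℝ) < 2)]; norm_num
      have hexp : (p:ℝ) / (2 * (P k : ℝ)) ≤
          ((n k : ℝ) / (2 * (P (k-1) : ℝ)) + 1 + 2 ^ (-(k:ℝ)))
            + (((p : ℝ) - (d k : ℝ) * (n k : ℝ)) / (2 * (P k : ℝ)) - 2 ^ (-(k:ℝ) - 2)) := by
        rw [hpow1, sub_div, hfrac]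
        linarith
      exact le_trans (Real.rpow_le_rpow_of_exponent_le (by norm_num) hexp) h3
  -- chain upper bound
  have hchainU : ∀ r : ℝ, 0 ≤ r → ∀ q, 1 ≤ q →
      (∀ z, q < z → (f z : ℝ) ≤ (2:ℝ) ^ r * (f (z-1) : ℝ)) →
      ∀ p, (f (q + p) : ℝ) ≤ (f q : ℝ) * (2:ℝ) ^ ((p:ℝ) * r) := by
    intro r hr q hq hs p
    induction p with
    | zero => simp
    | succ p ih =>
      have h1 := hs (q + p + 1) (by omega)
      simp only [Nat.add_sub_cancel] at h1
      have h2 : (f (q + (p+1)) : ℝ) ≤ (2:ℝ) ^ r * (f (q + p) : ℝ) := by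
        rw [show q + (p+1) = q + p + 1 by ring]
        exact h1
      calc (f (q + (p+1)) : ℝ) ≤ (2:ℝ) ^ r * (f (q + p) : ℝ) := h2
        _ ≤ (2:ℝ) ^ r * ((f q : ℝ) * (2:ℝ) ^ ((p:ℝ) * r)) :=
            mul_le_mul_of_nonneg_left ih (Real.rpow_nonneg (by norm_num) _)
        _ = (f q : ℝ) * (2:ℝ) ^ (((p:ℕ)+1:ℝ) * r) := by
            rw [show ((p:ℕ)+1:ℝ) * r = (p:ℝ) * r + r by ring,
              Real.rpow_add (by norm_num : (0:ℝ) < 2)]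
            ring
        _ = (f q : ℝ) * (2:ℝ) ^ ((((p+1):ℕ):ℝ) * r) := by push_cast; ring
  -- global step bound with exponent 1
  have hstepAll : ∀ z, 2 ≤ z → (f z : ℝ) ≤ (2:ℝ) ^ (1:ℝ) * (f (z-1) : ℝ) := by
    intro z hz
    by_cases hb : z ≤ n 1
    · obtain ⟨w, rfl⟩ : ∃ w, z = w + 1 := ⟨z - 1, by omega⟩
      rw [hbase (w+1) (by omega) hb, hbase (w+1-1) (by omega) (by omega), Real.rpow_one]
      simp only [Nat.add_sub_cancel]
      push_cast
      rw [pow_succ]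
      linarith [pow_nonneg (by norm_num : (0:ℝ) ≤ 2) w]
    · push_neg at hb
      obtain ⟨j, hj1, hj2, hj3⟩ := hcover (z-1) (by omega)
      have h1 := hUBstep j hj1 z (by omega) (by omega)
      refine le_trans h1 (mul_le_mul_of_nonneg_right ?_ (Nat.cast_nonneg _))
      apply Real.rpow_le_rpow_of_exponent_le (by norm_num)
      have : (1:ℝ) ≤ (P j : ℝ) := by exact_mod_cast hPpos j
      rw [div_le_one (by nlinarith)]
      nlinarith
  -- the key asymmetric bound
  have key : ∀ p q, 1 ≤ p → 1 ≤ q → p ≤ q → f (q + p) ≤ f p * f q := by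
    intro p q hp hq hpq
    obtain ⟨r, hr0, hrstep, hrlow⟩ :
        ∃ r : ℝ, 0 ≤ r ∧ (∀ z, q < z → (f z : ℝ) ≤ (2:ℝ) ^ r * (f (z-1) : ℝ)) ∧
          (2:ℝ) ^ ((p:ℝ) * r) ≤ (f p : ℝ) := by
      by_cases hcase : p < n 1
      · refine ⟨1, zero_le_one, fun z hz => hstepAll z (by omega), ?_⟩
        rw [hbase p hp (le_of_lt hcase)]
        rw [mul_one, Real.rpow_natCast]
        push_cast
        exact le_refl _
      · push_neg at hcase
        obtain ⟨k, hk1, hk2, hk3⟩ := hcover p hcase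
        refine ⟨(1:ℝ) / (2 * (P k : ℝ)), by positivity, ?_, ?_⟩
        · intro z hz
          have hz1 : n k ≤ z - 1 := by omega
          have hn1z : n 1 ≤ z - 1 := le_trans (hnmono 1 k le_rfl hk1) hz1
          obtain ⟨j, hj1, hj2, hj3⟩ := hcover (z-1) hn1z
          have hkj : k ≤ j := by
            by_contra hcon
            push_neg at hcon
            have : n (j+1) ≤ n k := hnmono (j+1) k (by omega) (by omega)
            omega
          have h1 := hUBstep j hj1 z (by omega) (by omega)
          refine le_trans h1 (mul_le_mul_of_nonneg_right ?_ (Nat.cast_nonneg _))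
          apply Real.rpow_le_rpow_of_exponent_le (by norm_num)
          have hjk : (P k : ℝ) ≤ (P j : ℝ) := by exact_mod_cast hPmono k j hkj
          have h2 : (1:ℝ) ≤ (P k : ℝ) := by exact_mod_cast hPpos k
          exact one_div_le_one_div_of_le (by linarith) (by linarith)
        · have := hLow k hk1 p hk2 (le_of_lt hk3)
          rw [show ((p:ℝ)) * ((1:ℝ)/(2 * (P k : ℝ))) = (p:ℝ) / (2 * (P k : ℝ)) by ring]
          exact this
    have h1 := hchainU r hr0 q hq hrstep p
    have h2 : (f (q + p) : ℝ) ≤ (f q : ℝ) * (f p : ℝ) :=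
      le_trans h1 (mul_le_mul_of_nonneg_left hrlow (Nat.cast_nonneg _))
    have : (f (q + p) : ℝ) ≤ ((f p * f q : ℕ) : ℝ) := by push_cast; linarith
    exact_mod_cast this
  constructor
  · intro a ha b hb hab
    simp only [Set.mem_Ici] at ha hb
    calc f a < f (a + 1) := hstep a ha
      _ ≤ f b := hmono (a+1) b (by omega) (by omega)
  · intro p q hp hq
    rcases le_total p q with h | h
    · have := key p q hp hq h
      rwa [add_comm q p] at this
    · have := key q p hq hp h
      rw [mul_comm] at this
      exact this
end

section
/- For every subexponential function g : ℕ → ℕ there exists an increasing, submultiplicative function f : ℕ → ℕ with g ⪯ f (i.e., g(n) ≤ f(Cn) for some C > 0 and all n) such that f is not equivalent to the growth function of any finitely generated algebra; in particular, there is no growth function γ of a finitely generated algebra and constants C, D with γ(n) ≤ f(Cn) ≤ γ(Dn) for all n. -/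
/-!
Let `G` be the running maximum of `g`. The function `f n = n + m n` is built from the pointwise
minimum `m` of pieces `h_k n = U_k * 2 ^ ((n - b_k) / t_k)` whose doubling periods `t_k` grow
quickly. Such a minimum is submultiplicative as long as `2 ^ (b_k / t_k + 2) ≤ U_k`, and since `G`
is subexponential the parameters can be taken so large that every piece dominates `G`. The start
`a_k` of the `k`-th piece is chosen so far out that `m = U_k` on the whole window `[a_k, b_k]`,
`b_k = (k + 1) a_k`, while `m (2 b_k) ≥ U_k * 2 ^ (b_k / t_k)`. (`t_k`, `a_k`, `b_k`, `U_k`,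
`h_k`, `m`, `f` are `period`, `flatStart`, `flatEnd`, `level`, `piece`, `envelope`,
`counterexample` below.)

If `γ(n) ≤ f(Cn) ≤ γ(Dn)`, then on the window with `k ≈ 2CD` the function `γ` grows at most
linearly over `[D a_k, 2 D a_k]`, so one of its increments there is at most `2C`. The derivative
condition propagates this bound to all increments up to `D (2 b_k + 1)`, which keeps `γ` within
`U_k + c_k a_k` for a constant `c_k` depending only on `k`; but `f` has meanwhile been multiplied
by `2 ^ (a_k / t_k)`, and `a_k` was chosen with `c_k a_k < 2 ^ (a_k / t_k)`.
-/

open Filter Topology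

namespace SubmultiplicativeNonGrowth

lemma add_div_le_add_div_add_one (a b c : ℕ) : (a + b) / c ≤ a / c + b / c + 1 := by
  rcases Nat.eq_zero_or_pos c with rfl | hc
  · simp
  · rw [Nat.add_div hc]
    split_ifs <;> omega

lemma eventually_mul_add_lt_two_pow_div (c T : ℕ) (hT : 0 < T) :
    ∀ᶠ n in atTop, c * n + c < 2 ^ (n / T) := by
  filter_upwards [(Nat.tendsto_div_const_atTop (n := 2 * T) (by omega)).eventually_ge_atTop
    (2 * c * T + 1)] with n hr
  set r := n / (2 * T)
  have hn : n < 2 * T * (r + 1) := Nat.lt_mul_div_succ n (by omega)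
  have hr2 : 2 * r ≤ n / T := by
    rw [show r = n / T / 2 by rw [Nat.div_div_eq_div_mul, mul_comm]]
    exact Nat.mul_div_le _ _
  calc c * n + c ≤ 2 * c * T * (r + 1) := by nlinarith
    _ < 2 * r ^ 2 + 1 := by nlinarith
    _ ≤ 2 ^ (2 * r) := Nat.two_mul_sq_add_one_le_two_pow_two_mul r
    _ ≤ 2 ^ (n / T) := Nat.pow_le_pow_right two_pos hr2

def IsSubexponential (G : ℕ → ℕ) : Prop :=
  ∀ T, 0 < T → ∀ᶠ n in atTop, G n ≤ 2 ^ (n / T)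

lemma isSubexponential_of_tendsto_logb {g : ℕ → ℕ}
    (hg : Tendsto (fun n : ℕ => Real.logb 2 (g n) / (n : ℝ)) atTop (𝓝 0)) :
    IsSubexponential g := by
  intro T hT
  have hε : (0 : ℝ) < 1 / (2 * T) := by positivity
  filter_upwards [hg.eventually (gt_mem_nhds hε), eventually_ge_atTop (2 * T)] with n hlog hn
  rcases Nat.eq_zero_or_pos (g n) with h0 | hpos
  · simp [h0]
  have hT' : (0 : ℝ) < T := by exact_mod_cast hT
  have hn' : (2 * T : ℝ) ≤ n := by exact_mod_cast hn
  have hlog' : Real.logb 2 (g n) < n / (2 * T) := by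
    rw [div_lt_iff₀ (by linarith)] at hlog
    linarith [show 1 / (2 * T) * (n : ℝ) = n / (2 * T) by ring]
  have hfloor : (n : ℝ) / (2 * T) ≤ (n / T : ℕ) := by
    have h := Nat.lt_floor_add_one ((n : ℝ) / T)
    rw [Nat.floor_div_eq_div] at h
    have h2 : (2 : ℝ) ≤ n / T := by rw [le_div_iff₀ hT']; linarith
    have h3 : (n : ℝ) / (2 * T) = (n / T) / 2 := by field_simp
    linarith
  have h : (g n : ℝ) < 2 ^ ((n / T : ℕ) : ℝ) :=
    ((Real.logb_lt_iff_lt_rpow one_lt_two (by exact_mod_cast hpos)).1 hlog').trans_le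
      (Real.rpow_le_rpow_of_exponent_le one_le_two hfloor)
  rw [Real.rpow_natCast] at h
  exact_mod_cast h.le

lemma eventually_partialSups_le {g φ : ℕ → ℕ} (hφ : Monotone φ) (hφ' : Tendsto φ atTop atTop)
    (hg : ∀ᶠ n in atTop, g n ≤ φ n) : ∀ᶠ n in atTop, partialSups g n ≤ φ n := by
  obtain ⟨N, hN⟩ := eventually_atTop.1 hg
  filter_upwards [eventually_ge_atTop N, hφ'.eventually_ge_atTop (partialSups g N)] with n hn hφn
  refine partialSups_le g n _ fun i hi => ?_
  rcases le_total i N with hiN | hNi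
  · exact (le_partialSups_of_le g hiN).trans hφn
  · exact (hN i hNi).trans (hφ hi)

lemma IsSubexponential.partialSups {g : ℕ → ℕ} (hg : IsSubexponential g) :
    IsSubexponential (partialSups g) := fun T hT =>
  eventually_partialSups_le (fun _ _ h => Nat.pow_le_pow_right two_pos (Nat.div_le_div_right h))
    ((tendsto_pow_atTop_atTop_of_one_lt one_lt_two).comp
      (Nat.tendsto_div_const_atTop hT.ne')) (hg T hT)

lemma add_mul_le_of_forall_lt_sub (γ : ℕ → ℕ) (N c L : ℕ)
    (h : ∀ x, N < x → x ≤ N + L → c < γ x - γ (x - 1)) : γ N + L * (c + 1) ≤ γ (N + L) := by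
  induction L with
  | zero => simp
  | succ L ih =>
    have h1 := ih fun x hx hxL => h x hx (by omega)
    have h2 := h (N + L + 1) (by omega) (by omega)
    rw [Nat.add_sub_cancel] at h2
    rw [add_one_mul, ← add_assoc]
    show _ ≤ γ (N + L + 1)
    omega

lemma le_add_mul_of_forall_sub_le (γ : ℕ → ℕ) (N B L : ℕ)
    (h : ∀ x, N < x → x ≤ N + L → γ x - γ (x - 1) ≤ B) : γ (N + L) ≤ γ N + L * B := by
  induction L with
  | zero => simp
  | succ L ih =>
    have h1 := ih fun x hx hxL => h x hx (by omega)
    have h2 := h (N + L + 1) (by omega) (by omega)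
    rw [Nat.add_sub_cancel] at h2
    rw [add_one_mul, ← add_assoc]
    show γ (N + L + 1) ≤ _
    omega

lemma exists_sub_le_of_le_add_mul {γ : ℕ → ℕ} {N c U : ℕ} (hN : 0 < N) (hlow : U ≤ γ N)
    (hup : γ (N + N) ≤ c * N + U) : ∃ x, N < x ∧ x ≤ N + N ∧ γ x - γ (x - 1) ≤ c := by
  by_contra! h
  have := add_mul_le_of_forall_lt_sub γ N c N h
  nlinarith

lemma le_mul_add_of_sub_le_pow {γ : ℕ → ℕ}
    (hγ : ∀ d n m : ℕ, n ≤ m → m ≤ d * n → γ m - γ (m - 1) ≤ (γ n - γ (n - 1)) ^ d)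
    {n₀ M c d U : ℕ} (hc : γ n₀ - γ (n₀ - 1) ≤ c) (hn₀ : γ n₀ ≤ c ^ d * n₀ + U)
    (hn₀M : n₀ ≤ M) (hM : M ≤ d * n₀) : γ M ≤ c ^ d * M + U := by
  have h := le_add_mul_of_forall_sub_le γ n₀ (c ^ d) (M - n₀) fun x hx hxM =>
    (hγ d n₀ x hx.le (by omega)).trans (Nat.pow_le_pow_left hc d)
  rw [Nat.add_sub_cancel' hn₀M] at h
  calc γ M ≤ c ^ d * n₀ + U + (M - n₀) * c ^ d := by omega
    _ = c ^ d * M + U := by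
      rw [mul_comm (M - n₀), add_right_comm, ← mul_add, Nat.add_sub_cancel' hn₀M]

noncomputable section

def threshold (P : ℕ → Prop) : ℕ := sInf {N | ∀ n ≥ N, P n}

lemma threshold_spec {P : ℕ → Prop} (h : ∀ᶠ n in atTop, P n) {n : ℕ} (hn : threshold P ≤ n) :
    P n :=
  Nat.sInf_mem (eventually_atTop.1 h) n hn

def period : ℕ → ℕ
  | 0 => 1
  | k + 1 => 2 * (k + 2) * period k

lemma period_pos (k : ℕ) : 0 < period k := by
  induction k with
  | zero => exact one_pos
  | succ k ih => exact Nat.mul_pos (by omega) ih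

lemma four_mul_period_le_succ (k : ℕ) : 4 * period k ≤ period (k + 1) :=
  Nat.mul_le_mul_right _ (by omega)

lemma period_mono : Monotone period :=
  monotone_nat_of_le_succ fun k => by have := four_mul_period_le_succ k; omega

-- `(2 * C) ^ (2 * K + 3) * D * (2 * flatEnd K + 1) ≤ growthConstant K * flatStart K` for
-- `C, D ≤ K`: the bound on `γ` over window `K` in `not_sandwiched`.
def growthConstant (K : ℕ) : ℕ := (2 * K + 3) ^ (2 * K + 5)

-- Conditions on the start `n` of piece `k + 1`, given piece `k` starts at `a` at level `U`: it
-- exceeds `2 * flatEnd k`; beyond it piece `k` stays below piece `k - 1`; `G` stays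
-- below `2 ^ (· / period (k + 1))`; and it beats the growth bound over window `k + 1`.
def IsNextStart (G : ℕ → ℕ) (k a U n : ℕ) : Prop :=
  2 * ((k + 1) * a) < n ∧ 4 * period k * (U + 1) ≤ n ∧ G n ≤ 2 ^ (n / period (k + 1)) ∧
    growthConstant (k + 1) * n + growthConstant (k + 1) < 2 ^ (n / period (k + 1))

def stage (G : ℕ → ℕ) : ℕ → ℕ × ℕ
  | 0 =>
    let a := threshold fun n => G n ≤ 2 ^ (n / period 0)
    (a, G a + 2 ^ (a / period 0 + 2))
  | k + 1 =>
    let a := threshold (IsNextStart G k (stage G k).1 (stage G k).2)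
    (a, (stage G k).2 * 2 ^ ((a - (k + 1) * (stage G k).1) / period k))

variable {G : ℕ → ℕ}

def flatStart (G : ℕ → ℕ) (k : ℕ) : ℕ := (stage G k).1

def flatEnd (G : ℕ → ℕ) (k : ℕ) : ℕ := (k + 1) * flatStart G k

def level (G : ℕ → ℕ) (k : ℕ) : ℕ := (stage G k).2

def piece (G : ℕ → ℕ) (k n : ℕ) : ℕ := level G k * 2 ^ ((n - flatEnd G k) / period k)

lemma level_succ (k : ℕ) : level G (k + 1) = piece G k (flatStart G (k + 1)) := rfl

lemma flatStart_le_flatEnd (k : ℕ) : flatStart G k ≤ flatEnd G k :=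
  Nat.le_mul_of_pos_left _ k.succ_pos

lemma level_le_succ (k : ℕ) : level G k ≤ level G (k + 1) :=
  Nat.le_mul_of_pos_right _ (by positivity)

lemma level_mono : Monotone (level G) := monotone_nat_of_le_succ level_le_succ

lemma piece_mono (k : ℕ) : Monotone (piece G k) := fun _ _ h =>
  Nat.mul_le_mul_left _
    (Nat.pow_le_pow_right two_pos (Nat.div_le_div_right (Nat.sub_le_sub_right h _)))

lemma level_le_piece (k n : ℕ) : level G k ≤ piece G k n :=
  Nat.le_mul_of_pos_right _ (by positivity)

lemma piece_of_le_flatEnd {k n : ℕ} (hn : n ≤ flatEnd G k) : piece G k n = level G k := by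
  simp [piece, Nat.sub_eq_zero_of_le hn]

lemma piece_mul_two_pow_le {k n : ℕ} (hn : flatEnd G k ≤ n) (x : ℕ) :
    piece G k n * 2 ^ (x / period k) ≤ piece G k (n + x) := by
  rw [piece, piece, mul_assoc, ← pow_add]
  gcongr
  · exact one_le_two
  · calc (n - flatEnd G k) / period k + x / period k ≤ (n - flatEnd G k + x) / period k :=
          Nat.div_add_div_le_add_div
      _ = (n + x - flatEnd G k) / period k := by congr 1; omega

lemma le_mul_two_pow_sub_div (hGm : Monotone G) {N U b t : ℕ}
    (hN : ∀ n ≥ N, G n ≤ 2 ^ (n / t)) (hGN : G N ≤ U) (hU : 2 ^ (b / t + 1) ≤ U) (n : ℕ) :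
    G n ≤ U * 2 ^ ((n - b) / t) := by
  rcases le_total n N with hn | hn
  · calc G n ≤ U := (hGm hn).trans hGN
      _ ≤ U * 2 ^ ((n - b) / t) := Nat.le_mul_of_pos_right _ (by positivity)
  · have hdiv : n / t ≤ (n - b) / t + (b / t + 1) := by
      have := add_div_le_add_div_add_one (n - b) b t
      have := Nat.div_le_div_right (c := t) (show n ≤ n - b + b by omega)
      omega
    calc G n ≤ 2 ^ (n / t) := hN n hn
      _ ≤ 2 ^ ((n - b) / t + (b / t + 1)) := Nat.pow_le_pow_right two_pos hdiv
      _ = 2 ^ (b / t + 1) * 2 ^ ((n - b) / t) := by rw [pow_add, mul_comm]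
      _ ≤ U * 2 ^ ((n - b) / t) := Nat.mul_le_mul_right _ hU

lemma isNextStart_of_le (hG : IsSubexponential G) {k n : ℕ} (hn : flatStart G (k + 1) ≤ n) :
    IsNextStart G k (flatStart G k) (level G k) n :=
  threshold_spec (P := IsNextStart G k (flatStart G k) (level G k))
    ((eventually_gt_atTop _).and ((eventually_ge_atTop _).and ((hG _ (period_pos _)).and
      (eventually_mul_add_lt_two_pow_div _ _ (period_pos _))))) hn

lemma two_mul_flatEnd_lt (hG : IsSubexponential G) (k : ℕ) :
    2 * flatEnd G k < flatStart G (k + 1) :=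
  (isNextStart_of_le hG le_rfl).1

lemma flatStart_strictMono (hG : IsSubexponential G) : StrictMono (flatStart G) :=
  strictMono_nat_of_lt_succ fun k => by
    have := two_mul_flatEnd_lt hG k
    have := flatStart_le_flatEnd (G := G) k
    omega

lemma two_mul_flatEnd_lt_of_lt (hG : IsSubexponential G) {j k : ℕ} (h : j < k) :
    2 * flatEnd G j < flatStart G k :=
  (two_mul_flatEnd_lt hG j).trans_le ((flatStart_strictMono hG).monotone h)

lemma le_two_pow_of_flatStart_le (hG : IsSubexponential G) :
    ∀ {k n : ℕ}, flatStart G k ≤ n → G n ≤ 2 ^ (n / period k)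
  | 0, _, hn => threshold_spec (P := fun n => G n ≤ 2 ^ (n / period 0)) (hG _ (period_pos 0)) hn
  | _ + 1, _, hn => (isNextStart_of_le hG hn).2.2.1

lemma growthConstant_mul_flatStart_lt (hG : IsSubexponential G) (k : ℕ) :
    growthConstant (k + 1) * flatStart G (k + 1) + growthConstant (k + 1) <
      2 ^ (flatStart G (k + 1) / period (k + 1)) :=
  (isNextStart_of_le hG le_rfl).2.2.2

lemma flatEnd_succ_div_le (hG : IsSubexponential G) (k : ℕ) :
    flatEnd G (k + 1) / period (k + 1) ≤ (flatStart G (k + 1) - flatEnd G k) / period k := by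
  have h := two_mul_flatEnd_lt hG k
  calc flatEnd G (k + 1) / period (k + 1)
      = (k + 2) * flatStart G (k + 1) / ((k + 2) * (2 * period k)) := by
        rw [flatEnd, period]; ring_nf
    _ = flatStart G (k + 1) / 2 / period k := by
        rw [Nat.mul_div_mul_left _ _ (by omega), Nat.div_div_eq_div_mul, mul_comm]
    _ ≤ (flatStart G (k + 1) - flatEnd G k) / period k := Nat.div_le_div_right (by omega)

lemma two_pow_le_level (hG : IsSubexponential G) :
    ∀ k, 2 ^ (flatEnd G k / period k + 2) ≤ level G k
  | 0 => by simp [level, flatEnd, flatStart, stage]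
  | k + 1 => by
    have h4 : 4 ≤ level G k :=
      (Nat.pow_le_pow_right two_pos (Nat.le_add_left 2 _)).trans (two_pow_le_level hG k)
    calc 2 ^ (flatEnd G (k + 1) / period (k + 1) + 2)
        = 4 * 2 ^ (flatEnd G (k + 1) / period (k + 1)) := by ring
      _ ≤ level G k * 2 ^ ((flatStart G (k + 1) - flatEnd G k) / period k) :=
        Nat.mul_le_mul h4 (Nat.pow_le_pow_right two_pos (flatEnd_succ_div_le hG k))

lemma four_le_level (hG : IsSubexponential G) (k : ℕ) : 4 ≤ level G k :=
  (Nat.pow_le_pow_right two_pos (Nat.le_add_left 2 _)).trans (two_pow_le_level hG k)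

lemma le_level (hG : IsSubexponential G) : ∀ k, G (flatStart G k) ≤ level G k
  | 0 => Nat.le_add_right _ _
  | k + 1 =>
    calc G (flatStart G (k + 1)) ≤ 2 ^ (flatStart G (k + 1) / period (k + 1)) :=
          le_two_pow_of_flatStart_le hG le_rfl
      _ ≤ 2 ^ (flatEnd G (k + 1) / period (k + 1)) :=
          Nat.pow_le_pow_right two_pos (Nat.div_le_div_right (flatStart_le_flatEnd _))
      _ ≤ 2 ^ ((flatStart G (k + 1) - flatEnd G k) / period k) :=
          Nat.pow_le_pow_right two_pos (flatEnd_succ_div_le hG k)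
      _ ≤ level G k * 2 ^ ((flatStart G (k + 1) - flatEnd G k) / period k) :=
          Nat.le_mul_of_pos_left _ (by have := four_le_level hG k; omega)

lemma le_piece (hG : IsSubexponential G) (hGm : Monotone G) (k n : ℕ) : G n ≤ piece G k n :=
  le_mul_two_pow_sub_div hGm (fun _ hn => le_two_pow_of_flatStart_le hG hn) (le_level hG k)
    ((Nat.pow_le_pow_right two_pos (by omega)).trans (two_pow_le_level hG k)) n

lemma piece_succ_le (hG : IsSubexponential G) {i n : ℕ} (hn : flatStart G (i + 2) ≤ n) :
    piece G (i + 1) n ≤ piece G i n := by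
  have hU : 4 * period (i + 1) * (level G (i + 1) + 1) ≤ n := (isNextStart_of_le hG hn).2.1
  have hb : 2 * flatEnd G i < n := (two_mul_flatEnd_lt_of_lt hG (by omega)).trans_le hn
  have hexp : level G (i + 1) + n / period (i + 1) ≤ (n - flatEnd G i) / period i := by
    have h1 : level G (i + 1) ≤ n / period i / 4 := by
      rw [Nat.le_div_iff_mul_le four_pos, Nat.le_div_iff_mul_le (period_pos _)]
      nlinarith [period_mono (Nat.le_succ i)]
    have h2 : n / period (i + 1) ≤ n / period i / 4 := by
      rw [Nat.div_div_eq_div_mul, mul_comm]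
      exact Nat.div_le_div_left (four_mul_period_le_succ i) (by have := period_pos i; omega)
    have h3 : 2 * (n / period i / 4) ≤ (n - flatEnd G i) / period i := by
      calc 2 * (n / period i / 4) ≤ n / period i / 2 := by omega
        _ = n / 2 / period i := by rw [Nat.div_div_eq_div_mul, Nat.div_div_eq_div_mul, mul_comm]
        _ ≤ (n - flatEnd G i) / period i := Nat.div_le_div_right (by omega)
    omega
  calc piece G (i + 1) n ≤ 2 ^ level G (i + 1) * 2 ^ (n / period (i + 1)) :=
        Nat.mul_le_mul Nat.lt_two_pow_self.le
          (Nat.pow_le_pow_right two_pos (Nat.div_le_div_right (Nat.sub_le _ _)))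
    _ = 2 ^ (level G (i + 1) + n / period (i + 1)) := (pow_add _ _ _).symm
    _ ≤ 2 ^ ((n - flatEnd G i) / period i) := Nat.pow_le_pow_right two_pos hexp
    _ ≤ level G i * 2 ^ ((n - flatEnd G i) / period i) :=
        Nat.le_mul_of_pos_left _ (by have := four_le_level hG i; omega)

lemma piece_le_piece_of_le (hG : IsSubexponential G) {i j n : ℕ} (hji : j ≤ i)
    (hn : flatStart G (i + 1) ≤ n) : piece G i n ≤ piece G j n := by
  induction i with
  | zero => rw [Nat.le_zero.1 hji]
  | succ i ih =>
    rcases hji.eq_or_lt with rfl | hlt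
    · exact le_rfl
    · exact (piece_succ_le hG hn).trans
        (ih (by omega) (((flatStart_strictMono hG).monotone (by omega)).trans hn))

lemma level_le_piece_of_le (hG : IsSubexponential G) {k n : ℕ} (hn : flatStart G k ≤ n)
    (j : ℕ) : level G k ≤ piece G j n := by
  rcases le_or_gt k j with hkj | hjk
  · exact (level_mono hkj).trans (level_le_piece j n)
  · obtain ⟨k, rfl⟩ : ∃ i, k = i + 1 := ⟨k - 1, by omega⟩
    calc level G (k + 1) = piece G k (flatStart G (k + 1)) := level_succ k
      _ ≤ piece G k n := piece_mono k hn
      _ ≤ piece G j n := piece_le_piece_of_le hG (by omega) hn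

lemma piece_add_le_mul (hG : IsSubexponential G) {j l : ℕ} (hlj : period l ≤ period j)
    (p q : ℕ) : piece G j (p + q) ≤ piece G j p * piece G l q := by
  have hq : q / period l ≤ (q - flatEnd G l) / period l + flatEnd G l / period l + 1 :=
    (Nat.div_le_div_right (show q ≤ q - flatEnd G l + flatEnd G l by omega)).trans
      (add_div_le_add_div_add_one _ _ _)
  have hexp : (p + q - flatEnd G j) / period j ≤ (p - flatEnd G j) / period j +
      ((q - flatEnd G l) / period l + (flatEnd G l / period l + 2)) := by
    have h1 := (Nat.div_le_div_right (c := period j)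
      (show p + q - flatEnd G j ≤ p - flatEnd G j + q by omega)).trans
      (add_div_le_add_div_add_one (p - flatEnd G j) q (period j))
    have h2 : q / period j ≤ q / period l := Nat.div_le_div_left hlj (period_pos l)
    omega
  calc piece G j (p + q) ≤ level G j * 2 ^ ((p - flatEnd G j) / period j +
        ((q - flatEnd G l) / period l + (flatEnd G l / period l + 2))) :=
        Nat.mul_le_mul_left _ (Nat.pow_le_pow_right two_pos hexp)
    _ = piece G j p * (2 ^ (flatEnd G l / period l + 2) * 2 ^ ((q - flatEnd G l) / period l)) := by
        rw [piece, pow_add, pow_add]; ring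
    _ ≤ piece G j p * piece G l q :=
        Nat.mul_le_mul_left _ (Nat.mul_le_mul_right _ (two_pow_le_level hG l))

def envelope (G : ℕ → ℕ) (n : ℕ) : ℕ := sInf (Set.range fun k => piece G k n)

lemma envelope_le_piece (k n : ℕ) : envelope G n ≤ piece G k n := Nat.sInf_le ⟨k, rfl⟩

lemma exists_piece_eq_envelope (n : ℕ) : ∃ k, piece G k n = envelope G n :=
  Nat.sInf_mem (Set.range_nonempty _)

lemma le_envelope {c n : ℕ} (h : ∀ k, c ≤ piece G k n) : c ≤ envelope G n := by
  obtain ⟨k, hk⟩ := exists_piece_eq_envelope (G := G) n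
  exact hk ▸ h k

lemma envelope_mono : Monotone (envelope G) := fun _ _ hmn =>
  le_envelope fun k => (envelope_le_piece k _).trans (piece_mono k hmn)

lemma one_le_envelope (hG : IsSubexponential G) (n : ℕ) : 1 ≤ envelope G n :=
  le_envelope fun k => le_trans (by have := four_le_level hG k; omega) (level_le_piece k n)

lemma envelope_eq_level (hG : IsSubexponential G) {k n : ℕ} (h₁ : flatStart G k ≤ n)
    (h₂ : n ≤ flatEnd G k) : envelope G n = level G k :=
  le_antisymm ((envelope_le_piece k n).trans_eq (piece_of_le_flatEnd h₂))
    (le_envelope (level_le_piece_of_le hG h₁))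

lemma level_mul_two_pow_le_envelope (hG : IsSubexponential G) (k : ℕ) :
    level G k * 2 ^ (flatEnd G k / period k) ≤ envelope G (2 * flatEnd G k) := by
  have hself : level G k * 2 ^ (flatEnd G k / period k) ≤ piece G k (2 * flatEnd G k) := by
    simpa [piece_of_le_flatEnd le_rfl, two_mul] using
      piece_mul_two_pow_le (G := G) le_rfl (flatEnd G k)
  refine le_envelope fun j => ?_
  rcases lt_trichotomy j k with hjk | rfl | hkj
  · have hb : flatEnd G j ≤ flatStart G k := by
      have := two_mul_flatEnd_lt_of_lt hG hjk; omega
    calc level G k * 2 ^ (flatEnd G k / period k)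
        ≤ piece G j (flatStart G k) * 2 ^ (flatEnd G k / period j) :=
          Nat.mul_le_mul (level_le_piece_of_le hG le_rfl j) (Nat.pow_le_pow_right two_pos
            (Nat.div_le_div_left (period_mono hjk.le) (period_pos j)))
      _ ≤ piece G j (flatStart G k + flatEnd G k) := piece_mul_two_pow_le hb _
      _ ≤ piece G j (2 * flatEnd G k) :=
          piece_mono j (by have := flatStart_le_flatEnd (G := G) k; omega)
  · exact hself
  · calc level G k * 2 ^ (flatEnd G k / period k) ≤ piece G k (2 * flatEnd G k) := hself
      _ ≤ piece G k (flatStart G (k + 1)) := piece_mono k (two_mul_flatEnd_lt hG k).le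
      _ ≤ level G j := level_mono hkj
      _ ≤ piece G j (2 * flatEnd G k) := level_le_piece j _

lemma envelope_add_le_mul (hG : IsSubexponential G) (p q : ℕ) :
    envelope G (p + q) ≤ envelope G p * envelope G q := by
  obtain ⟨j, hj⟩ := exists_piece_eq_envelope (G := G) p
  obtain ⟨l, hl⟩ := exists_piece_eq_envelope (G := G) q
  rcases le_total (period l) (period j) with h | h
  · calc envelope G (p + q) ≤ piece G j (p + q) := envelope_le_piece j _
      _ ≤ piece G j p * piece G l q := piece_add_le_mul hG h p q
      _ = envelope G p * envelope G q := by rw [hj, hl]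
  · calc envelope G (p + q) ≤ piece G l (q + p) := add_comm p q ▸ envelope_le_piece l _
      _ ≤ piece G l q * piece G j p := piece_add_le_mul hG h q p
      _ = envelope G p * envelope G q := by rw [hj, hl, mul_comm]

lemma le_envelope_of_monotone (hG : IsSubexponential G) (hGm : Monotone G) (n : ℕ) :
    G n ≤ envelope G n :=
  le_envelope fun k => le_piece hG hGm k n

def counterexample (G : ℕ → ℕ) (n : ℕ) : ℕ := n + envelope G n

lemma counterexample_strictMono : StrictMono (counterexample G) := fun _ _ h =>
  Nat.add_lt_add_of_lt_of_le h (envelope_mono h.le)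

lemma counterexample_add_le_mul (hG : IsSubexponential G) (p q : ℕ) :
    counterexample G (p + q) ≤ counterexample G p * counterexample G q := by
  have := envelope_add_le_mul hG p q
  have := one_le_envelope hG p
  have := one_le_envelope hG q
  simp only [counterexample]
  nlinarith

lemma counterexample_eq (hG : IsSubexponential G) {k n : ℕ} (h₁ : flatStart G k ≤ n)
    (h₂ : n ≤ flatEnd G k) : counterexample G n = n + level G k := by
  rw [counterexample, envelope_eq_level hG h₁ h₂]

lemma level_mul_two_pow_le_counterexample (hG : IsSubexponential G) {k n : ℕ}
    (hn : 2 * flatEnd G k ≤ n) :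
    level G k * 2 ^ (flatEnd G k / period k) ≤ counterexample G n :=
  (level_mul_two_pow_le_envelope hG k).trans ((envelope_mono hn).trans (Nat.le_add_left _ _))

lemma sandwiched_on_window (hG : IsSubexponential G) {γ : ℕ → ℕ} {C D K : ℕ} (hC : 1 ≤ C)
    (hD : 1 ≤ D) (hK : 2 * (C * D) ≤ K + 1) (hA : 1 ≤ flatStart G K)
    (H : ∀ n : ℕ, 1 ≤ n → γ n ≤ counterexample G (C * n) ∧ counterexample G (C * n) ≤ γ (D * n)) :
    level G K ≤ γ (D * flatStart G K) ∧ ∀ n, D * flatStart G K ≤ n →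
      n ≤ D * flatStart G K + D * flatStart G K → γ n ≤ C * n + level G K := by
  set A := flatStart G K
  have hB : flatEnd G K = (K + 1) * A := rfl
  have hCK : C ≤ K + 1 := by nlinarith
  have hDA : A ≤ D * A := Nat.le_mul_of_pos_left _ hD
  constructor
  · have hflat := counterexample_eq hG (k := K) (Nat.le_mul_of_pos_left A hC)
      (by rw [hB]; exact Nat.mul_le_mul_right _ hCK)
    have := (H A hA).2
    omega
  · intro n h₁ h₂
    have hflat := counterexample_eq hG (k := K) (n := C * n)
      (hDA.trans (h₁.trans (Nat.le_mul_of_pos_left _ hC)))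
      (calc C * n ≤ C * (D * A + D * A) := Nat.mul_le_mul_left _ h₂
        _ = 2 * (C * D) * A := by ring
        _ ≤ flatEnd G K := by rw [hB]; exact Nat.mul_le_mul_right _ hK)
    exact hflat ▸ (H n (hA.trans (hDA.trans h₁))).1

theorem not_sandwiched (hG : IsSubexponential G) (γ : ℕ → ℕ)
    (hγ : ∀ d n m : ℕ, n ≤ m → m ≤ d * n → γ m - γ (m - 1) ≤ (γ n - γ (n - 1)) ^ d)
    {C D : ℕ} (hC : 1 ≤ C) (hD : 1 ≤ D) :
    ¬ ∀ n : ℕ, 1 ≤ n → γ n ≤ counterexample G (C * n) ∧ counterexample G (C * n) ≤ γ (D * n) := by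
  intro H
  -- window `K` is so wide that `C * [D a_K, 2 D a_K] ⊆ [a_K, b_K]`, where `f` is flat
  obtain ⟨K, hK⟩ : ∃ K, K = 2 * (C * D) + 1 := ⟨_, rfl⟩
  have hCK : C ≤ K := by nlinarith
  have hDK : D ≤ K := by nlinarith
  set A := flatStart G K
  set U := level G K
  have hB : flatEnd G K = (K + 1) * A := rfl
  have hA : 1 ≤ A := by
    have := two_mul_flatEnd_lt hG (2 * (C * D))
    rw [← hK] at this
    omega
  obtain ⟨hlow, hup⟩ := sandwiched_on_window hG hC hD (by omega) hA H
  obtain ⟨n₀, hn₀, hn₀', hinc⟩ := exists_sub_le_of_le_add_mul (c := 2 * C) (by positivity) hlow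
    ((hup _ (by omega) le_rfl).trans_eq (by ring))
  set M := D * (2 * ((K + 1) * A) + 1) with hMdef
  have hBA : 2 * ((K + 1) * A) + 1 ≤ (2 * K + 3) * A := by nlinarith
  have hM : M ≤ (2 * K + 3) * n₀ :=
    calc M ≤ D * ((2 * K + 3) * A) := Nat.mul_le_mul_left _ hBA
      _ = (2 * K + 3) * (D * A) := by ring
      _ ≤ (2 * K + 3) * n₀ := Nat.mul_le_mul_left _ hn₀.le
  have hγn₀ : γ n₀ ≤ (2 * C) ^ (2 * K + 3) * n₀ + U := by
    have hpow : C ≤ (2 * C) ^ (2 * K + 3) := (Nat.le_mul_of_pos_left C two_pos).trans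
      (Nat.le_self_pow (by omega) _)
    have := Nat.mul_le_mul_right n₀ hpow
    have := hup n₀ hn₀.le hn₀'
    omega
  have hγM : γ M ≤ growthConstant K * A + U := by
    refine (le_mul_add_of_sub_le_pow hγ hinc hγn₀ (hn₀'.trans (by rw [hMdef]; nlinarith)) hM).trans
      (Nat.add_le_add_right ?_ U)
    calc (2 * C) ^ (2 * K + 3) * M
        ≤ (2 * K + 3) ^ (2 * K + 3) * ((2 * K + 3) * ((2 * K + 3) * A)) :=
          Nat.mul_le_mul (Nat.pow_le_pow_left (by omega) _) (Nat.mul_le_mul (by omega) hBA)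
      _ = growthConstant K * A := by rw [growthConstant]; ring
  have hfM : U * 2 ^ ((K + 1) * A / period K) ≤ γ M :=
    (level_mul_two_pow_le_counterexample hG (by rw [hB]; nlinarith)).trans
      (H (2 * ((K + 1) * A) + 1) (by omega)).2
  have hgap : growthConstant K * A + growthConstant K < 2 ^ (A / period K) := by
    have := growthConstant_mul_flatStart_lt hG (2 * (C * D))
    rwa [← hK] at this
  have hQ : 2 ^ (A / period K) ≤ 2 ^ ((K + 1) * A / period K) :=
    Nat.pow_le_pow_right two_pos (Nat.div_le_div_right (flatStart_le_flatEnd K))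
  have hU : 1 ≤ U := by have := four_le_level hG K; omega
  have hc : 1 ≤ growthConstant K := Nat.one_le_pow _ _ (by omega)
  have h := (Nat.mul_le_mul_left U (hgap.trans_le hQ)).trans hfM
  nlinarith [Nat.mul_le_mul_right (growthConstant K * A) hU, Nat.mul_le_mul hU hc]

end

end SubmultiplicativeNonGrowth

open SubmultiplicativeNonGrowth

/-- Main theorem: for every subexponential `g : ℕ → ℕ` there is an increasing,
submultiplicative `f : ℕ → ℕ` with `g ⪯ f` which is not equivalent to any
growth function of a finitely generated algebra.  Growth functions are
abstracted as increasing functions `γ` satisfying the derivative condition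
`γ' m ≤ γ' n ^ d` for all `m ∈ {n, …, d n}` and all `d`. -/
theorem stmt_17 (g : ℕ → ℕ)
    (hg : Filter.Tendsto (fun n : ℕ => Real.logb 2 (g n) / (n : ℝ))
      Filter.atTop (nhds 0)) :
    ∃ f : ℕ → ℕ,
      StrictMonoOn f (Set.Ici 1) ∧
      (∀ p q : ℕ, 1 ≤ p → 1 ≤ q → f (p + q) ≤ f p * f q) ∧
      (∃ C : ℕ, 0 < C ∧ ∀ n : ℕ, 1 ≤ n → g n ≤ f (C * n)) ∧
      (∀ γ : ℕ → ℕ, Monotone γ →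
        (∀ d n m : ℕ, n ≤ m → m ≤ d * n →
          γ m - γ (m - 1) ≤ (γ n - γ (n - 1)) ^ d) →
        ∀ C D : ℕ, 1 ≤ C → 1 ≤ D →
          ¬ (∀ n : ℕ, 1 ≤ n → γ n ≤ f (C * n) ∧ f (C * n) ≤ γ (D * n))) := by
  have hG := (isSubexponential_of_tendsto_logb hg).partialSups
  refine ⟨counterexample (partialSups g), counterexample_strictMono.strictMonoOn _,
    fun p q _ _ => counterexample_add_le_mul hG p q, ⟨1, one_pos, fun n _ => ?_⟩,
    fun γ _ hγ C D hC hD => not_sandwiched hG γ hγ hC hD⟩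
  rw [one_mul]
  exact (le_partialSups g n).trans
    ((le_envelope_of_monotone hG (partialSups g).monotone n).trans (Nat.le_add_left _ _))
end
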